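/- arXiv:2401.01819 — 2 statements merged into one kernel-verified Lean document; each statement's English description precedes it below -/
import Mathlib

section
/- Let q = p^k be a power of a prime p, and let m, n be positive integers with m ≤ p and n > 2m. Fix β ∈ F_{q^n}^* and c_1,…,c_m ∈ F_q^*. Let e be a divisor of L_{q^n−1} and let p_1, …, p_r be the distinct primes dividing L_{q^n−1} but not e; let g be a monic divisor of x^n−1 in F_q[x] and let g_1, …, g_s be the distinct monic irreducible polynomials dividing x^n−1 but not g. Then for every j ∈ {1,…,m}: Ψ(L_{q^n−1},…,L_{q^n−1}, x^n−1, j) ≥ Σ_{l=1}^m Σ_{i=1}^r Ψ(e,…,e, p_i e, e,…,e, g, j) (where p_i e occupies the l-th slot) + Σ_{i=1}^s Ψ(e,…,e, g_i·g, j) − (mr+s−1)·Ψ(e,…,e, g, j). -/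
open Polynomial

noncomputable section

/-- A primitive element of a finite field: a generator of the multiplicative group,
i.e. an element of multiplicative order `|F| - 1`. -/
def IsPrimitiveElem {F : Type} [Monoid F] [Fintype F] (a : F) : Prop :=
  orderOf a = Fintype.card F - 1

/-- `a` is normal over `Fq`: its conjugates `a^(q^i)`, `0 ≤ i < n`, form a basis of `F`
as an `Fq`-vector space. -/
def IsNormalElem (q n : ℕ) (Fq : Type) {F : Type} [Field Fq] [Field F] [Algebra Fq F]
    (a : F) : Prop :=
  LinearIndependent Fq (fun i : Fin n => a ^ q ^ (i : ℕ)) ∧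
    Submodule.span Fq (Set.range fun i : Fin n => a ^ q ^ (i : ℕ)) = ⊤

/-- The norm from `F_{q^n}` to `F_q`: the product of the conjugates
`a · a^q ⋯ a^{q^{n-1}}`. -/
def normMap (q n : ℕ) {F : Type} [CommMonoid F] (a : F) : F :=
  ∏ i ∈ Finset.range n, a ^ q ^ i

/-- `W r`: the number of squarefree positive divisors of `r`. -/
def Wnat (r : ℕ) : ℕ := Set.ncard {d : ℕ | d ∣ r ∧ Squarefree d}

/-- `W f`: the number of monic squarefree divisors of the polynomial `f`. -/
def Wpoly {Fq : Type} [Field Fq] (f : Fq[X]) : ℕ :=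
  Set.ncard {h : Fq[X] | h.Monic ∧ Squarefree h ∧ h ∣ f}

/-- The largest divisor of `N` coprime to `kk`. -/
def Ldiv (N kk : ℕ) : ℕ := sSup {d : ℕ | d ∣ N ∧ Nat.Coprime d kk}

/-- `a` is `e`-free: `a = γ^d` with `d` a positive divisor of `e` forces `d = 1`. -/
def IsEFree (e : ℕ) {F : Type} [Monoid F] (a : F) : Prop :=
  ∀ d : ℕ, 0 < d → d ∣ e → (∃ γ : F, a = γ ^ d) → d = 1

/-- The `F_q[x]`-module action on `F_{q^n}`: `f ∘ a = Σ aᵢ a^{q^i}`. -/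
def polyAct (q : ℕ) {Fq F : Type} [Field Fq] [Field F] [Algebra Fq F]
    (f : Fq[X]) (a : F) : F :=
  f.sum fun i cc => cc • a ^ q ^ i

/-- `a` is `g`-free: `a = h ∘ γ` with `h` a monic divisor of `g` forces `h = 1`. -/
def IsGFree (q : ℕ) {Fq F : Type} [Field Fq] [Field F] [Algebra Fq F]
    (g : Fq[X]) (a : F) : Prop :=
  ∀ h : Fq[X], h.Monic → h ∣ g → (∃ γ : F, a = polyAct q h γ) → h = 1

/-- `Ψ(f₁,…,f_m, g, j)`: the number of `α ∈ F_{q^n}^*` such that `α+(i-1)β` is `fᵢ`-free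
with norm `cᵢ` for all `i`, and `α+(j-1)β` is `g`-free. -/
def Psi (q n m : ℕ) {Fq F : Type} [Field Fq] [Field F] [Algebra Fq F]
    (β : F) (c : Fin m → Fq) (f : Fin m → ℕ) (g : Fq[X]) (j : Fin m) : ℕ :=
  Set.ncard {α : F | α ≠ 0 ∧
    (∀ i : Fin m, IsEFree (f i) (α + (i : ℕ) • β)) ∧
    IsGFree q g (α + (j : ℕ) • β) ∧
    ∀ i : Fin m, normMap q n (α + (i : ℕ) • β) = algebraMap Fq F (c i)}

/-- `Ψ(f₁,…,f_m, g)`: as `Psi`, but `α+(j-1)β` is `g`-free for at least one `j`. -/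
def PsiAny (q n m : ℕ) {Fq F : Type} [Field Fq] [Field F] [Algebra Fq F]
    (β : F) (c : Fin m → Fq) (f : Fin m → ℕ) (g : Fq[X]) : ℕ :=
  Set.ncard {α : F | α ≠ 0 ∧
    (∀ i : Fin m, IsEFree (f i) (α + (i : ℕ) • β)) ∧
    (∃ j : Fin m, IsGFree q g (α + (j : ℕ) • β)) ∧
    ∀ i : Fin m, normMap q n (α + (i : ℕ) • β) = algebraMap Fq F (c i)}

/-- `θ(e) = φ(e)/e`. -/
def theta (e : ℕ) : ℝ := (Nat.totient e : ℝ) / (e : ℝ)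

/-- `Φ_q(g) = |(F_q[x]/(g))ˣ|`. -/
def PhiQ {Fq : Type} [Field Fq] (g : Fq[X]) : ℕ :=
  Nat.card ((Fq[X] ⧸ Ideal.span {g})ˣ)

/-- `Θ(g) = Φ_q(g)/q^{deg g}`. -/
def ThetaPoly (q : ℕ) {Fq : Type} [Field Fq] (g : Fq[X]) : ℝ :=
  (PhiQ g : ℝ) / (q : ℝ) ^ g.natDegree

/-- The canonical additive character `x ↦ exp(2πi·Tr_{F/F_p}(x)/p)`. -/
def canonChar (p : ℕ) {F : Type} [Field F] [Algebra (ZMod p) F] (x : F) : ℂ :=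
  Complex.exp (2 * Real.pi * Complex.I * ((Algebra.trace (ZMod p) F x).val : ℂ) / (p : ℂ))

end


noncomputable section

/-- auxiliary set underlying `Psi`. -/
def PsiSet (q n m : ℕ) {Fq F : Type} [Field Fq] [Field F] [Algebra Fq F]
    (β : F) (c : Fin m → Fq) (f : Fin m → ℕ) (g : Fq[X]) (j : Fin m) : Set F :=
  {α : F | α ≠ 0 ∧
    (∀ i : Fin m, IsEFree (f i) (α + (i : ℕ) • β)) ∧
    IsGFree q g (α + (j : ℕ) • β) ∧
    ∀ i : Fin m, normMap q n (α + (i : ℕ) • β) = algebraMap Fq F (c i)}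

end

lemma isEFree_of_dvd {F : Type} [Monoid F] {e1 e2 : ℕ} (h : e1 ∣ e2) {a : F}
    (H : IsEFree e2 a) : IsEFree e1 a :=
  fun d hd hdvd hex => H d hd (hdvd.trans h) hex

lemma isGFree_of_dvd {q : ℕ} {Fq F : Type} [Field Fq] [Field F] [Algebra Fq F]
    {g1 g2 : Fq[X]} (h : g1 ∣ g2) {a : F} (H : IsGFree q g2 a) : IsGFree q g1 a :=
  fun hh hm hdvd hex => H hh hm (hdvd.trans h) hex

lemma PsiSet_mono {q n m : ℕ} {Fq F : Type} [Field Fq] [Field F] [Algebra Fq F]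
    {β : F} {c : Fin m → Fq} {f f' : Fin m → ℕ} {g g' : Fq[X]} {j : Fin m}
    (h1 : ∀ i, f i ∣ f' i) (h2 : g ∣ g') :
    PsiSet q n m β c f' g' j ⊆ PsiSet q n m β c f g j := by
  rintro α ⟨h0, hE, hGf, hN⟩
  exact ⟨h0, fun i => isEFree_of_dvd (h1 i) (hE i), isGFree_of_dvd h2 hGf, hN⟩

lemma polyAct_mul (p k q : ℕ) (hp : p.Prime)  (hq : q = p ^ k)
    (Fq F : Type) [Field Fq] [Fintype Fq] [Field F] [Algebra Fq F]
    (hchar : CharP F p) (hcardq : Fintype.card Fq = q)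
    (f h : Fq[X]) (a : F) :
    polyAct q (f * h) a = polyAct q f (polyAct q h a) := by
  haveI : Fact p.Prime := ⟨hp⟩
  haveI := hchar
  have hadd : ∀ x y : F, (x + y) ^ q = x ^ q + y ^ q := by
    intro x y; rw [hq]; exact add_pow_char_pow x y p k
  have hsmul : ∀ (cc : Fq) (x : F), (cc • x) ^ q = cc • x ^ q := by
    intro cc x
    rw [Algebra.smul_def, Algebra.smul_def, mul_pow, ← map_pow, ← hcardq,
      FiniteField.pow_card]
  let φ : F →ₗ[Fq] F :=
    { toFun := fun x => x ^ q
      map_add' := hadd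
      map_smul' := fun cc x => hsmul cc x }
  have hpow : ∀ (i : ℕ) (x : F), (φ ^ i) x = x ^ q ^ i := by
    intro i
    induction i with
    | zero => intro x; simp
    | succ i ih =>
      intro x
      rw [pow_succ, Module.End.mul_apply, ih]
      show (x ^ q) ^ q ^ i = x ^ q ^ (i + 1)
      rw [← pow_mul, ← pow_succ']
  have key : ∀ (f : Fq[X]) (x : F), polyAct q f x = (Polynomial.aeval φ f) x := by
    intro f x
    rw [Polynomial.aeval_endomorphism]
    unfold polyAct
    simp only [Polynomial.sum]
    exact Finset.sum_congr rfl fun i _ => by rw [hpow]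
  rw [key (f * h) a, key f (polyAct q h a), key h a, map_mul, Module.End.mul_apply]

lemma bonferroni {α : Type} [Fintype α] {ι : Type} (I : Finset ι) (B : Set α)
    (A : ι → Set α) (hA : ∀ t ∈ I, A t ⊆ B) :
    (∑ t ∈ I, ((A t).ncard : ℤ)) - ((I.card : ℤ) - 1) * (B.ncard : ℤ)
      ≤ ((B ∩ ⋂ t ∈ I, A t).ncard : ℤ) := by
  classical
  induction I using Finset.induction_on with
  | empty => simp
  | @insert a I' ha ih =>
    have ih' := ih (fun t ht => hA t (Finset.mem_insert_of_mem ht))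
    have hXsub : (B ∩ ⋂ t ∈ I', A t) ⊆ B := Set.inter_subset_left
    have hAa : A a ⊆ B := hA a (Finset.mem_insert_self a I')
    have hkey := Set.ncard_inter_add_ncard_union (B ∩ ⋂ t ∈ I', A t) (A a)
      (Set.toFinite _) (Set.toFinite _)
    have hle : ((B ∩ ⋂ t ∈ I', A t) ∪ A a).ncard ≤ B.ncard :=
      Set.ncard_le_ncard (Set.union_subset hXsub hAa) (Set.toFinite _)
    have hset : B ∩ ⋂ t ∈ insert a I', A t = (B ∩ ⋂ t ∈ I', A t) ∩ A a := by
      rw [Finset.set_biInter_insert]; ext x; simp only [Set.mem_inter_iff]; tauto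
    rw [Finset.sum_insert ha, Finset.card_insert_of_notMem ha, hset]
    have hkeyZ := congrArg (Nat.cast : ℕ → ℤ) hkey
    push_cast at hkeyZ
    have hleZ : (_ : ℤ) ≤ _ := Nat.cast_le.mpr hle
    push_cast
    linarith [ih', hkeyZ, hleZ]


/-- sieving inequality. -/
theorem sieving_inequality
    (p k q m n : ℕ) (hp : p.Prime) (hq : q = p ^ k) (hk : 1 ≤ k)
    (hm : 1 ≤ m) (hmp : m ≤ p) (hn : 2 * m < n)
    (Fq F : Type) [Field Fq] [Fintype Fq] [Field F] [Fintype F] [Algebra Fq F]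
    (hcardq : Fintype.card Fq = q) (hcardF : Fintype.card F = q ^ n)
    (β : F) (hβ : β ≠ 0) (c : Fin m → Fq) (hc0 : ∀ i, c i ≠ 0)
    (e : ℕ) (he : e ∣ Ldiv (q ^ n - 1) (q - 1))
    (r s : ℕ)
    (P : Fin r → ℕ) (hPinj : Function.Injective P)
    (hP : ∀ i, (P i).Prime ∧ P i ∣ Ldiv (q ^ n - 1) (q - 1) ∧ ¬ P i ∣ e)
    (hPall : ∀ ℓ : ℕ, ℓ.Prime → ℓ ∣ Ldiv (q ^ n - 1) (q - 1) → ¬ ℓ ∣ e → ∃ i, P i = ℓ)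
    (g : Fq[X]) (hg : g.Monic) (hgdvd : g ∣ (X : Fq[X]) ^ n - 1)
    (G : Fin s → Fq[X]) (hGinj : Function.Injective G)
    (hG : ∀ i, (G i).Monic ∧ Irreducible (G i) ∧ G i ∣ (X : Fq[X]) ^ n - 1 ∧ ¬ G i ∣ g)
    (hGall : ∀ h : Fq[X], h.Monic → Irreducible h → h ∣ (X : Fq[X]) ^ n - 1 → ¬ h ∣ g →
      ∃ i, G i = h)
    (j : Fin m) :
    (∑ l : Fin m, ∑ i : Fin r,
        (Psi q n m β c (Function.update (fun _ => e) l (P i * e)) g j : ℤ)) +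
      (∑ i : Fin s, (Psi q n m β c (fun _ => e) (G i * g) j : ℤ)) -
      ((m : ℤ) * r + s - 1) * (Psi q n m β c (fun _ => e) g j : ℤ)
    ≤ (Psi q n m β c (fun _ => Ldiv (q ^ n - 1) (q - 1)) ((X : Fq[X]) ^ n - 1) j : ℤ) := by
  classical
  have hn0 : 0 < n := lt_of_le_of_lt (Nat.zero_le _) hn
  -- the characteristic of F is p
  have hchar : CharP F p := by
    have h1 : ((p : F)) ^ (k * n) = 0 := by
      have h0 := Nat.cast_card_eq_zero F
      rw [hcardF, hq] at h0
      rw [pow_mul]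
      exact_mod_cast h0
    have h2 : (p : F) = 0 :=
      (pow_eq_zero_iff (by positivity)).mp h1
    have h3 : ringChar F ∣ p := (CharP.cast_eq_zero_iff F (ringChar F) p).mp h2
    have h4 : ringChar F = p :=
      ((hp.eq_one_or_self_of_dvd _ h3).resolve_left (CharP.ringChar_ne_one (R := F)))
    exact ringChar.of_eq h4
  set L := Ldiv (q ^ n - 1) (q - 1) with hL
  -- index type and families of sets
  let ι := (Fin m × Fin r) ⊕ Fin s
  let SB : Set F := PsiSet q n m β c (fun _ => e) g j
  let A : ι → Set F := Sum.elim
    (fun x : Fin m × Fin r =>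
      PsiSet q n m β c (Function.update (fun _ => e) x.1 (P x.2 * e)) g j)
    (fun i : Fin s => PsiSet q n m β c (fun _ => e) (G i * g) j)
  have hsubs : ∀ t ∈ (Finset.univ : Finset ι), A t ⊆ SB := by
    rintro (⟨l, i0⟩ | i0) -
    · refine PsiSet_mono (fun i => ?_) dvd_rfl
      rcases eq_or_ne i l with h | h
      · subst h; rw [Function.update_self]; exact dvd_mul_left e (P i0)
      · rw [Function.update_of_ne h]
    · exact PsiSet_mono (fun i => dvd_rfl) (dvd_mul_left g (G i0))
  -- main inclusion
  have hmain : (SB ∩ ⋂ t ∈ (Finset.univ : Finset ι), A t) ⊆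
      PsiSet q n m β c (fun _ => L) ((X : Fq[X]) ^ n - 1) j := by
    rintro α ⟨⟨h0, hE, hGfree, hN⟩, hall⟩
    have hall' : ∀ t : ι, α ∈ A t := by
      intro t
      have := Set.mem_iInter₂.mp hall t (Finset.mem_univ t)
      exact this
    refine ⟨h0, ?_, ?_, hN⟩
    · -- L-freeness at every slot
      intro i d hd hdL hex
      by_contra hd1
      obtain ⟨ℓ, hℓp, hℓd⟩ := Nat.exists_prime_and_dvd hd1
      obtain ⟨γ, hγ⟩ := hex
      have hγℓ : α + (i : ℕ) • β = (γ ^ (d / ℓ)) ^ ℓ := by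
        rw [← pow_mul, Nat.div_mul_cancel hℓd]; exact hγ
      have hℓL : ℓ ∣ L := hℓd.trans hdL
      by_cases hce : ℓ ∣ e
      · exact hℓp.ne_one (hE i ℓ hℓp.pos hce ⟨_, hγℓ⟩)
      · obtain ⟨i0, hi0⟩ := hPall ℓ hℓp hℓL hce
        obtain ⟨-, hE', -, -⟩ := hall' (Sum.inl (i, i0))
        refine hℓp.ne_one (hE' i ℓ hℓp.pos ?_ ⟨_, hγℓ⟩)
        rw [Function.update_self, hi0]
        exact dvd_mul_right ℓ e
    · -- (Xⁿ - 1)-freeness at slot j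
      intro h hmon hdvd hex
      by_contra h1
      obtain ⟨γ, hγ⟩ := hex
      have hnu : ¬ IsUnit h := fun hu => h1 (hmon.eq_one_of_isUnit hu)
      obtain ⟨w, hwirr, hwd⟩ := WfDvdMonoid.exists_irreducible_factor hnu hmon.ne_zero
      have hw0 : w ≠ 0 := hwirr.ne_zero
      set w' : Fq[X] := normalize w with hw'
      have hassoc : Associated w w' := associated_normalize w
      have hw'mon : w'.Monic := monic_normalize hw0
      have hw'irr : Irreducible w' := hassoc.irreducible hwirr
      have hw'd : w' ∣ h := (normalize_dvd_iff).mpr hwd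
      have hw'dvd : w' ∣ (X : Fq[X]) ^ n - 1 := dvd_trans hw'd hdvd
      obtain ⟨t, ht⟩ := hw'd
      have hact : α + (j : ℕ) • β = polyAct q w' (polyAct q t γ) := by
        rw [hγ, ht, polyAct_mul p k q hp hq Fq F hchar hcardq]
      by_cases hcg : w' ∣ g
      · exact hw'irr.ne_one (hGfree w' hw'mon hcg ⟨_, hact⟩)
      · obtain ⟨i0, hi0⟩ := hGall w' hw'mon hw'irr hw'dvd hcg
        obtain ⟨-, -, hG', -⟩ := hall' (Sum.inr i0)
        refine hw'irr.ne_one (hG' w' hw'mon ?_ ⟨_, hact⟩)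
        rw [hi0]
        exact dvd_mul_right w' g
  -- Bonferroni inequality
  have hb := bonferroni (Finset.univ : Finset ι) SB A hsubs
  have hmono : (((SB ∩ ⋂ t ∈ (Finset.univ : Finset ι), A t).ncard : ℤ)) ≤
      ((PsiSet q n m β c (fun _ => L) ((X : Fq[X]) ^ n - 1) j).ncard : ℤ) :=
    Nat.cast_le.mpr (Set.ncard_le_ncard hmain (Set.toFinite _))
  have hsum : (∑ t ∈ (Finset.univ : Finset ι), ((A t).ncard : ℤ)) =
      (∑ l : Fin m, ∑ i : Fin r,
        ((PsiSet q n m β c (Function.update (fun _ => e) l (P i * e)) g j).ncard : ℤ)) +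
      ∑ i : Fin s, ((PsiSet q n m β c (fun _ => e) (G i * g) j).ncard : ℤ) := by
    rw [show (∑ t ∈ (Finset.univ : Finset ι), ((A t).ncard : ℤ)) =
        ∑ t : ι, ((A t).ncard : ℤ) from rfl, Fintype.sum_sum_type]
    simp only [A, Sum.elim_inl, Sum.elim_inr]
    rw [Fintype.sum_prod_type]
  have hcard : (((Finset.univ : Finset ι)).card : ℤ) = (m : ℤ) * r + s := by
    simp [ι, Finset.card_univ]
  rw [hsum, hcard] at hb
  show (∑ l : Fin m, ∑ i : Fin r,
        ((PsiSet q n m β c (Function.update (fun _ => e) l (P i * e)) g j).ncard : ℤ)) +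
      (∑ i : Fin s, ((PsiSet q n m β c (fun _ => e) (G i * g) j).ncard : ℤ)) -
      ((m : ℤ) * r + s - 1) * ((SB.ncard : ℤ))
    ≤ ((PsiSet q n m β c (fun _ => L) ((X : Fq[X]) ^ n - 1) j).ncard : ℤ)
  linarith [hb, hmono]
end

section
/- Let q = p^k be a prime power and let n = n'·p^i with i ≥ 0, gcd(n', p) = 1, and n' not dividing q−1. Let d > 2 be the multiplicative order of q modulo n', and let s be the number of monic irreducible factors of x^{n'}−1 over F_q of degree exactly d. Set δ = 1 − s/q^d and Δ = (s−1)/δ + 2. Then δ > 0 and Δ < 2n'. -/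
open Polynomial

/-!
The degree-`d` monic irreducible factors of `x^{n'} - 1` are pairwise coprime, so their product
divides `x^{n'} - 1`; hence `s * d ≤ n'`, and `3 * s ≤ n'` as `d ≥ 3`. Since `q` has order `d`
modulo `n'`, `n' ∣ q^d - 1`, so `q^d ≥ n' + 1`. With these two bounds `δ > 0` is immediate and
`Δ < 2 n'` becomes an elementary inequality in `s`, `n'` and `q^d`.
-/

theorem Polynomial.ncard_monic_irreducible_dvd_natDegree_eq_mul_le {K : Type*} [Field K]
    {f : K[X]} (hf : f ≠ 0) (d : ℕ) :
    {h : K[X] | h.Monic ∧ Irreducible h ∧ h ∣ f ∧ h.natDegree = d}.ncard * d ≤ f.natDegree := by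
  set S := {h : K[X] | h.Monic ∧ Irreducible h ∧ h ∣ f ∧ h.natDegree = d}
  obtain hS | hS := S.infinite_or_finite
  · simp [hS.ncard]
  -- Distinct monic irreducibles are coprime, so the product of all of `S` still divides `f`.
  have hcoprime : (hS.toFinset : Set K[X]).Pairwise (Function.onFun IsCoprime id) := by
    intro g hg h hh hgh
    simp only [Set.Finite.coe_toFinset] at hg hh
    refine (hg.2.1.coprime_iff_not_dvd).2 fun hdvd => hgh ?_
    exact eq_of_monic_of_associated hg.1 hh.1 (hg.2.1.associated_of_dvd hh.2.1 hdvd)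
  have hprod_dvd : ∏ h ∈ hS.toFinset, h ∣ f :=
    Finset.prod_dvd_of_coprime hcoprime fun h hh => ((hS.mem_toFinset).1 hh).2.2.1
  have hmonic : ∀ h ∈ hS.toFinset, h.Monic := fun h hh => ((hS.mem_toFinset).1 hh).1
  calc S.ncard * d = ∑ h ∈ hS.toFinset, h.natDegree := by
        rw [Finset.sum_congr rfl fun h hh => ((hS.mem_toFinset).1 hh).2.2.2,
          Finset.sum_const, smul_eq_mul, Set.ncard_eq_toFinset_card S hS]
    _ = (∏ h ∈ hS.toFinset, h).natDegree := (natDegree_prod_of_monic _ _ hmonic).symm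
    _ ≤ f.natDegree := natDegree_le_of_dvd hprod_dvd hf

theorem ZMod.dvd_pow_orderOf_natCast_sub_one {q : ℕ} (hq : 0 < q) (n : ℕ) :
    n ∣ q ^ orderOf (q : ZMod n) - 1 := by
  rw [← ZMod.natCast_eq_zero_iff, Nat.cast_sub (Nat.one_le_pow _ _ hq), Nat.cast_pow,
    pow_orderOf_eq_one, Nat.cast_one, sub_self]

theorem sub_one_div_one_sub_div_add_two_lt {s n Q : ℝ} (hn : 1 ≤ n)
    (hsn : 3 * s ≤ n) (hnQ : n + 1 ≤ Q) :
    (s - 1) / (1 - s / Q) + 2 < 2 * n := by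
  have hQ : 0 < Q := by linarith
  have hsQ : 0 < Q - s := by linarith
  rw [one_sub_div hQ.ne', div_div_eq_mul_div, ← lt_sub_iff_add_lt, div_lt_iff₀ hsQ]
  nlinarith [mul_nonneg (by linarith : (0 : ℝ) ≤ Q - n - 1) (by linarith : (0 : ℝ) ≤ 2 * n - 1 - s)]

theorem delta_sieve_bound_general
    (q : ℕ)
    (n' : ℕ)
    (Fq : Type) [Field Fq] [Fintype Fq] (hcardq : Fintype.card Fq = q)
    (d : ℕ) (hd : d = orderOf (q : ZMod n')) (hd2 : 2 < d)
    (s : ℕ)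
    (hs : s = Set.ncard {h : Fq[X] | h.Monic ∧ Irreducible h ∧
      h ∣ (X : Fq[X]) ^ n' - 1 ∧ h.natDegree = d})
    (δ Δ : ℝ) (hδ : δ = 1 - (s : ℝ) / (q : ℝ) ^ d) (hΔ : Δ = ((s : ℝ) - 1) / δ + 2) :
    0 < δ ∧ Δ < 2 * (n' : ℝ) := by
  have hq : 2 ≤ q := hcardq ▸ Fintype.one_lt_card
  have hqd : 2 ≤ q ^ d := le_self_pow₀ (by omega) (by omega) |>.trans' hq
  have hdvd : n' ∣ q ^ d - 1 := hd ▸ ZMod.dvd_pow_orderOf_natCast_sub_one (by omega) n'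
  have hn'Q : n' + 1 ≤ q ^ d := by have := Nat.le_of_dvd (by omega) hdvd; omega
  have hn' : 0 < n' := Nat.pos_of_ne_zero fun h => by
    rw [h, zero_dvd_iff] at hdvd; omega
  have hsd : s * d ≤ n' := by
    have := ncard_monic_irreducible_dvd_natDegree_eq_mul_le (X_pow_sub_C_ne_zero hn' (1 : Fq)) d
    rwa [natDegree_X_pow_sub_C, map_one, ← hs] at this
  have hsn : 3 * s ≤ n' := by nlinarith
  have hn'QR : (n' : ℝ) + 1 ≤ (q : ℝ) ^ d := by exact_mod_cast hn'Q
  have hsnR : 3 * (s : ℝ) ≤ n' := by exact_mod_cast hsn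
  refine ⟨?_, ?_⟩
  · rw [hδ, sub_pos, div_lt_one (by positivity)]
    linarith [s.cast_nonneg (α := ℝ)]
  · rw [hΔ, hδ]
    exact sub_one_div_one_sub_div_add_two_lt (by exact_mod_cast hn') hsnR hn'QR

/-- Lemma 6.4: bound on Δ for the degree-`d` sieve. -/
theorem delta_sieve_bound
    (p kk q : ℕ) (hp : p.Prime) (hq : q = p ^ kk) (hk : 1 ≤ kk)
    (n n' i : ℕ) (hnn : n = n' * p ^ i) (hcop : Nat.Coprime n' p) (hndvd : ¬ n' ∣ q - 1)
    (Fq : Type) [Field Fq] [Fintype Fq] (hcardq : Fintype.card Fq = q)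
    (d : ℕ) (hd : d = orderOf (q : ZMod n')) (hd2 : 2 < d)
    (s : ℕ)
    (hs : s = Set.ncard {h : Fq[X] | h.Monic ∧ Irreducible h ∧
      h ∣ (X : Fq[X]) ^ n' - 1 ∧ h.natDegree = d})
    (δ Δ : ℝ) (hδ : δ = 1 - (s : ℝ) / (q : ℝ) ^ d) (hΔ : Δ = ((s : ℝ) - 1) / δ + 2) :
    0 < δ ∧ Δ < 2 * (n' : ℝ) :=
  delta_sieve_bound_general q n' Fq hcardq d hd hd2 s hs δ Δ hδ hΔ
end
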